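/- The family { det Δ_0(α) : α ∈ B^{N+} } is a basis of the polynomial ring E = ℂ[x_{01}, ..., x_{0N}, x_{01}', ..., x_{0N}', ...] as a ℂ-vector space. -/

import Mathlib

/-!
Expand `det Δ₀(α)` over permutations: the term of `σ` is the monomial
`∏_c x_{0,j(c)}^{(α_c - row(σ c))}` times `sign σ ∏_c binom(α_c, row(σ c))`, and the binomials
vanish unless `row(σ c) ≤ α_c` for all `c`. Order monomials colexicographically, comparing
first the variables of the smallest block and, within a block, those of the highest derivative.
For `σ ≠ 1`, let `c₀` be the moved column with the largest diagonal row; composing `σ` with the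
transposition of `c₀` and `σ c₀` fixes `c₀` and strictly lowers the monomial. Hence the diagonal
monomial is the smallest one in `det Δ₀(α)`, with a nonzero coefficient, and every term has the
same weight (`x^{(l)}` has weight `l + 1`).

In block `j` the diagonal monomial has exponents `α^j_t - s_{j+1} - t`, a nondecreasing
sequence, and every nondecreasing sequence arises this way, so `α ↦` diagonal monomial is a
bijection from `B^{N+}` onto all monomials. Distinct lowest monomials give linear independence;
since each weight space contains finitely many monomials, unitriangularity gives spanning.
-/
open Finset MvPolynomial Equiv Function

theorem Finsupp.toColex_lt_of_add_single_eq {α : Type*} [LinearOrder α] {M M' : α →₀ ℕ}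
    {u u' v v' : α} (h : M' + single u 1 + single v 1 = M + single u' 1 + single v' 1)
    (hu' : u' < u) (hv : v < u) (hv' : v' < u) : toColex M' < toColex M := by
  refine Colex.lt_iff.2 ⟨u, fun w hw => ?_, ?_⟩
  · have := DFunLike.congr_fun h w
    simpa [single_apply, hw.ne, (hu'.trans hw).ne, (hv.trans hw).ne, (hv'.trans hw).ne]
      using this
  · have := DFunLike.congr_fun h u
    simp only [coe_add, Pi.add_apply, single_eq_same, single_apply, hu'.ne, hv.ne, hv'.ne,
      if_false] at this
    change M' u < M u
    omega

theorem Finsupp.finite_setOf_weight_eq {σ : Type*} (w : σ → ℕ) (hw : ∀ x, w x ≠ 0)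
    (hfin : ∀ n, {x | w x ≤ n}.Finite) (n : ℕ) : {d : σ →₀ ℕ | weight w d = n}.Finite := by
  classical
  refine (Set.finite_Iic (∑ x ∈ (hfin n).toFinset, single x n)).subset fun d hd x => ?_
  by_cases hx : d x = 0
  · simp [hx]
  have hd : weight w d = n := hd
  calc d x ≤ n := hd ▸ le_weight w (hw x) d
    _ = single x n x := by simp
    _ ≤ _ := by
      rw [finsetSum_apply]
      exact Finset.single_le_sum (f := fun y => single y n x) (fun _ _ => Nat.zero_le _)
        ((hfin n).mem_toFinset.2 (hd ▸ le_weight_of_ne_zero' w hx))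

theorem wellFounded_fiberwise_gt {α γ δ : Type*} [Preorder δ] (f : α → γ) (k : α → δ)
    (hf : ∀ c, (f ⁻¹' {c}).Finite) : WellFounded fun x y => f x = f y ∧ k y < k x := by
  refine Subrelation.wf (r := InvImage (· < ·) fun y => {x | f x = f y ∧ k y < k x}.ncard)
    ?_ (InvImage.wf _ wellFounded_lt)
  rintro x y ⟨hxy, hlt⟩
  refine Set.ncard_lt_ncard ⟨fun z hz => ⟨hz.1.trans hxy, hlt.trans hz.2⟩, fun hsub => ?_⟩
    ((hf (f y)).subset fun z hz => hz.1)
  exact lt_irrefl _ (hsub ⟨hxy, hlt⟩).2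

namespace MvPolynomial

variable {σ ι : Type*}

theorem span_range_eq_top_of_triangular {K : Type*} [Field K] (f : ι → MvPolynomial σ K)
    (lead : ι → σ →₀ ℕ) (hlead : Surjective lead) {r : (σ →₀ ℕ) → (σ →₀ ℕ) → Prop}
    (hr : WellFounded r) (hcoeff : ∀ i, coeff (lead i) (f i) ≠ 0)
    (hsupp : ∀ i, ∀ m ∈ (f i).support, m ≠ lead i → r m (lead i)) :
    Submodule.span K (Set.range f) = ⊤ := by
  classical
  set S := Submodule.span K (Set.range f)
  have hmon : ∀ m (c : K), monomial m c ∈ S := by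
    intro m
    induction m using hr.induction with | _ m ih => ?_
    intro c
    obtain ⟨i, rfl⟩ := hlead m
    have hsplit : monomial (lead i) (coeff (lead i) (f i)) =
        f i - ∑ m ∈ (f i).support.erase (lead i), monomial m (coeff m (f i)) := by
      rw [eq_sub_iff_add_eq, add_comm, sum_erase_add _ _ (mem_support_iff.2 (hcoeff i)),
        support_sum_monomial_coeff]
    have hlead_mem : monomial (lead i) (coeff (lead i) (f i)) ∈ S := by
      rw [hsplit]
      refine S.sub_mem (Submodule.subset_span ⟨i, rfl⟩) (S.sum_mem fun m hm => ?_)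
      obtain ⟨hne, hm⟩ := mem_erase.1 hm
      exact ih m (hsupp i m hm hne) _
    simpa [smul_monomial, div_mul_cancel₀ c (hcoeff i)] using
      S.smul_mem (c / coeff (lead i) (f i)) hlead_mem
  rw [eq_top_iff]
  rintro p -
  rw [← support_sum_monomial_coeff p]
  exact S.sum_mem fun m _ => hmon m _

theorem linearIndependent_of_triangular {R δ : Type*} [CommRing R] [NoZeroDivisors R]
    [LinearOrder δ] (key : (σ →₀ ℕ) → δ) (f : ι → MvPolynomial σ R) (lead : ι → σ →₀ ℕ)
    (hlead : Injective lead) (hcoeff : ∀ i, coeff (lead i) (f i) ≠ 0)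
    (hsupp : ∀ i, ∀ m ∈ (f i).support, m ≠ lead i → key (lead i) < key m) :
    LinearIndependent R f := by
  classical
  rw [linearIndependent_iff]
  intro l hl
  by_contra hl0
  obtain ⟨i₀, hi₀, hmin⟩ :=
    l.support.exists_min_image (key ∘ lead) (Finsupp.support_nonempty_iff.2 hl0)
  have hcoeff₀ := congrArg (coeff (lead i₀)) hl
  rw [Finsupp.linearCombination_apply, Finsupp.sum, coeff_sum, coeff_zero,
    sum_eq_single_of_mem i₀ hi₀, coeff_smul, smul_eq_mul] at hcoeff₀
  · exact mul_ne_zero (Finsupp.mem_support_iff.1 hi₀) (hcoeff i₀) hcoeff₀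
  · intro i hi hne
    rw [coeff_smul, notMem_support_iff.1 fun hm => ?_, smul_zero]
    exact (hsupp i _ hm (hlead.ne hne.symm)).not_ge (hmin i hi)

end MvPolynomial

theorem Finset.sum_add_pair_comm {ι M : Type*} [Fintype ι] [DecidableEq ι] [AddCommMonoid M]
    {g h : ι → M} {c₀ c₁ : ι} (hne : c₀ ≠ c₁) (hgh : ∀ c, c ≠ c₀ → c ≠ c₁ → g c = h c) :
    ∑ c, g c + (h c₀ + h c₁) = ∑ c, h c + (g c₀ + g c₁) := by
  rw [← sum_sdiff (subset_univ {c₀, c₁}) (f := g), ← sum_sdiff (subset_univ {c₀, c₁}) (f := h),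
    sum_pair hne, sum_pair hne, sum_congr rfl fun c hc => hgh c ?_ ?_]
  · abel
  all_goals simp_all

section PermMonomial

variable {β ι : Type*} [Fintype ι] (blk : ι → β) (p a : ι → ℕ)

def jetWeight (v : β × ℕ) : ℕ := v.2 + 1

lemma finite_setOf_jetWeight_le [Finite β] (n : ℕ) : {x : β × ℕ | jetWeight x ≤ n}.Finite :=
  (Set.finite_univ.prod (Set.finite_Iio n)).subset fun x (hx : x.2 + 1 ≤ n) =>
    ⟨trivial, Set.mem_Iio.2 (by omega)⟩

noncomputable def permMonomial (σ : Perm ι) : (β × ℕ) →₀ ℕ :=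
  ∑ c, .single (blk c, a c - p (σ c)) 1

lemma weight_permMonomial_add_sum {σ : Perm ι} (hσa : ∀ c, p (σ c) ≤ a c) :
    Finsupp.weight jetWeight (permMonomial blk p a σ) + ∑ c, p c = ∑ c, (a c + 1) := by
  rw [permMonomial, map_sum, ← Equiv.sum_comp σ p, ← sum_add_distrib]
  refine sum_congr rfl fun c _ => ?_
  have := hσa c
  simp only [Finsupp.weight_single, jetWeight, smul_eq_mul, one_mul]
  omega

end PermMonomial

section ColexOrder

variable {β : Type*} [LinearOrder β]

def varLex : β × ℕ ≃ βᵒᵈ ×ₗ ℕ := (prodCongr OrderDual.toDual (Equiv.refl ℕ)).trans toLex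

lemma varLex_lt_varLex {v w : β × ℕ} :
    varLex v < varLex w ↔ w.1 < v.1 ∨ v.1 = w.1 ∧ v.2 < w.2 := by
  simp [varLex, Prod.Lex.toLex_lt_toLex]

noncomputable def colexKey (m : (β × ℕ) →₀ ℕ) : Colex ((βᵒᵈ ×ₗ ℕ) →₀ ℕ) :=
  toColex (Finsupp.domCongr varLex m)

lemma colexKey_lt_of_add_single_eq {M M' : (β × ℕ) →₀ ℕ} {u u' v v' : β × ℕ}
    (h : M' + .single u 1 + .single v 1 = M + .single u' 1 + .single v' 1)
    (hu' : varLex u' < varLex u) (hv : varLex v < varLex u) (hv' : varLex v' < varLex u) :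
    colexKey M' < colexKey M := by
  refine Finsupp.toColex_lt_of_add_single_eq ?_ hu' hv hv'
  simpa only [map_add, Finsupp.domCongr_apply, Finsupp.equivMapDomain_single] using
    congrArg (Finsupp.domCongr varLex) h

end ColexOrder

section Staircase

variable {β ι : Type*} [LinearOrder β] [Fintype ι] (blk : ι → β) (p a : ι → ℕ)

/-- In `Δ₀(α)`, column `c = (j, t)` lies in block `blk c = j`, is `C_{a c}` with `a c = α^j_t`,
and has its diagonal entry in row `p c`. -/
structure IsStaircase : Prop where
  injective : Injective p
  blk_le_of_lt : ∀ ⦃c c'⦄, p c < p c' → blk c' ≤ blk c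
  lt_of_blk_eq : ∀ ⦃c c'⦄, blk c = blk c' → p c < p c' → a c < a c'
  le : ∀ c, p c ≤ a c

variable {blk p a}

theorem IsStaircase.exists_colexKey_lt_of_ne_one [DecidableEq ι] (hS : IsStaircase blk p a)
    {σ : Perm ι} (hσ : σ ≠ 1) (hσa : ∀ c, p (σ c) ≤ a c) :
    ∃ τ : Perm ι, τ.support.card < σ.support.card ∧ (∀ c, p (τ c) ≤ a c) ∧
      colexKey (permMonomial blk p a τ) < colexKey (permMonomial blk p a σ) := by
  obtain ⟨c₀, hc₀, hmax⟩ :=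
    σ.support.exists_max_image p (nonempty_iff_ne_empty.2 (mt Perm.support_eq_empty_iff.1 hσ))
  have h₀ : σ c₀ ≠ c₀ := Perm.mem_support.1 hc₀
  have hpσ : p (σ c₀) < p c₀ :=
    (hmax _ (Perm.apply_mem_support.2 hc₀)).lt_of_ne (hS.injective.ne h₀)
  set c₁ := σ⁻¹ c₀
  have hσc₁ : σ c₁ = c₀ := by simp [c₁]
  have hne : c₁ ≠ c₀ := fun h => h₀ (by rw [← h, hσc₁, h])
  have hp₁ : p c₁ < p c₀ :=
    (hmax _ (Perm.mem_support.2 (by rw [hσc₁]; exact hne.symm))).lt_of_ne (hS.injective.ne hne)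
  set τ := swap c₀ (σ c₀) * σ
  have hτ₀ : τ c₀ = c₀ := swap_apply_right _ _
  have hτ₁ : τ c₁ = σ c₀ := by simp [τ, hσc₁]
  have hτ : ∀ c, c ≠ c₀ → c ≠ c₁ → τ c = σ c := fun c h0 h1 =>
    swap_apply_of_ne_of_ne (fun h => h1 (by simp [c₁, ← h])) (σ.injective.ne h0)
  have hτa : ∀ c, p (τ c) ≤ a c := by
    intro c
    by_cases e₀ : c = c₀
    · rw [e₀, hτ₀]; exact hS.le c₀
    by_cases e₁ : c = c₁
    · rw [e₁, hτ₁]; have := hσa c₁; rw [hσc₁] at this; omega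
    · rw [hτ c e₀ e₁]; exact hσa c
  have hpa₁ : p c₀ ≤ a c₁ := hσc₁ ▸ hσa c₁
  have hblk : blk c₀ < blk c₁ ∨ blk c₁ = blk c₀ ∧ a c₁ < a c₀ :=
    (hS.blk_le_of_lt hp₁).lt_or_eq.imp_right fun h => ⟨h.symm, hS.lt_of_blk_eq h.symm hp₁⟩
  -- Of the four variables whose powers change, `u` (used by `σ` at `c₀`, not by `τ`) is largest.
  refine ⟨τ, Perm.card_support_swap_mul h₀, hτa, colexKey_lt_of_add_single_eq
    (u := (blk c₀, a c₀ - p (σ c₀))) (u' := (blk c₀, a c₀ - p c₀))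
    (v := (blk c₁, a c₁ - p c₀)) (v' := (blk c₁, a c₁ - p (σ c₀))) ?_ ?_ ?_ ?_⟩
  · have := sum_add_pair_comm (g := fun c => Finsupp.single (blk c, a c - p (τ c)) 1)
      (h := fun c => Finsupp.single (blk c, a c - p (σ c)) 1) hne.symm
      fun c h0 h1 => by rw [hτ c h0 h1]
    simpa [permMonomial, add_assoc, hτ₀, hτ₁, hσc₁] using this
  · exact varLex_lt_varLex.2 (Or.inr ⟨rfl, by have := hS.le c₀; simp only; omega⟩)
  · exact varLex_lt_varLex.2 (hblk.imp_right fun h => ⟨h.1, by simp only; omega⟩)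
  · exact varLex_lt_varLex.2 (hblk.imp_right fun h => ⟨h.1, by simp only; omega⟩)

theorem IsStaircase.colexKey_permMonomial_one_lt [DecidableEq ι] (hS : IsStaircase blk p a)
    {σ : Perm ι} (hσ : σ ≠ 1) (hσa : ∀ c, p (σ c) ≤ a c) :
    colexKey (permMonomial blk p a 1) < colexKey (permMonomial blk p a σ) := by
  obtain ⟨τ, hcard, hτa, hlt⟩ := hS.exists_colexKey_lt_of_ne_one hσ hσa
  rcases eq_or_ne τ 1 with rfl | hτ
  · exact hlt
  · exact (hS.colexKey_permMonomial_one_lt hτ hτa).trans hlt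
termination_by σ.support.card

theorem IsStaircase.weight_permMonomial (hS : IsStaircase blk p a) {σ : Perm ι}
    (hσa : ∀ c, p (σ c) ≤ a c) :
    Finsupp.weight jetWeight (permMonomial blk p a σ) =
      Finsupp.weight jetWeight (permMonomial blk p a 1) := by
  have h₁ := weight_permMonomial_add_sum blk p a hσa
  have h₂ := weight_permMonomial_add_sum blk p a (σ := 1) hS.le
  omega

end Staircase

section JetMatrix

variable {β ι R : Type*} [Fintype ι] [CommRing R] (blk : ι → β) (p a : ι → ℕ)

noncomputable def jetMatrix : Matrix ι ι (MvPolynomial (β × ℕ) R) :=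
  fun r c => C ((a c).choose (p r) : R) * X (blk c, a c - p r)

lemma det_jetMatrix [DecidableEq ι] : (jetMatrix (R := R) blk p a).det = ∑ σ : Perm ι,
    Perm.sign σ • monomial (permMonomial blk p a σ) (∏ c, ((a c).choose (p (σ c)) : R)) := by
  rw [Matrix.det_apply]
  refine sum_congr rfl fun σ _ => ?_
  simp only [jetMatrix, C_mul_X_eq_monomial, permMonomial, monomial_sum_prod]

variable {blk p a}

lemma prod_choose_eq_zero {σ : Perm ι} {c : ι} (hc : a c < p (σ c)) :
    ∏ c, ((a c).choose (p (σ c)) : R) = 0 :=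
  prod_eq_zero (mem_univ c) (by rw [Nat.choose_eq_zero_of_lt hc, Nat.cast_zero])

lemma exists_perm_of_mem_support_det [DecidableEq ι] {m : (β × ℕ) →₀ ℕ}
    (hm : m ∈ (jetMatrix (R := R) blk p a).det.support) :
    ∃ σ : Perm ι, (∀ c, p (σ c) ≤ a c) ∧ permMonomial blk p a σ = m := by
  classical
  rw [det_jetMatrix, mem_support_iff, coeff_sum] at hm
  obtain ⟨σ, -, hσ⟩ := exists_ne_zero_of_sum_ne_zero hm
  rw [Units.smul_def, coeff_smul, coeff_monomial] at hσ
  refine ⟨σ, fun c => ?_, by_contra fun hne => hσ (by simp [hne])⟩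
  by_contra! hlt
  exact hσ (by simp [prod_choose_eq_zero hlt])

variable [LinearOrder β]

theorem IsStaircase.mem_support_det [DecidableEq ι] (hS : IsStaircase blk p a)
    {m : (β × ℕ) →₀ ℕ} (hm : m ∈ (jetMatrix (R := R) blk p a).det.support)
    (hne : m ≠ permMonomial blk p a 1) :
    Finsupp.weight jetWeight m = Finsupp.weight jetWeight (permMonomial blk p a 1) ∧
      colexKey (permMonomial blk p a 1) < colexKey m := by
  obtain ⟨σ, hσa, rfl⟩ := exists_perm_of_mem_support_det hm
  have hσ : σ ≠ 1 := by rintro rfl; exact hne rfl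
  exact ⟨hS.weight_permMonomial hσa, hS.colexKey_permMonomial_one_lt hσ hσa⟩

theorem IsStaircase.coeff_det_ne_zero [DecidableEq ι] [IsDomain R] [CharZero R]
    (hS : IsStaircase blk p a) :
    coeff (permMonomial blk p a 1) (jetMatrix (R := R) blk p a).det ≠ 0 := by
  classical
  rw [det_jetMatrix, coeff_sum, sum_eq_single_of_mem 1 (mem_univ 1)]
  · simpa using prod_ne_zero_iff.2 fun c _ =>
      (Nat.cast_ne_zero (R := R)).2 (Nat.choose_pos (hS.le c)).ne'
  · intro σ _ hσ
    rw [Units.smul_def, coeff_smul, coeff_monomial]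
    by_cases hσa : ∀ c, p (σ c) ≤ a c
    · rw [if_neg fun h => (hS.colexKey_permMonomial_one_lt hσ hσa).ne' (congrArg colexKey h),
        smul_zero]
    · obtain ⟨c, hc⟩ := not_forall.1 hσa
      simp [prod_choose_eq_zero (not_le.1 hc)]

end JetMatrix

lemma List.count_ofFn {α : Type*} [DecidableEq α] {k : ℕ} (g : Fin k → α) (x : α) :
    (List.ofFn g).count x = #{t | g t = x} := by
  rw [← Multiset.coe_count, ← Fin.univ_val_map, Multiset.count_map, card_def, filter_val]
  simp only [eq_comm]

lemma StrictMono.add_le_add_of_le {k : ℕ} {g : Fin k → ℕ} (hg : StrictMono g) {t t' : Fin k}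
    (h : t ≤ t') : g t + t' ≤ g t' + t := by
  obtain ⟨d, hd⟩ : ∃ d, (t' : ℕ) = t + d := ⟨t' - t, by omega⟩
  induction d generalizing t' with
  | zero => rw [show t' = t from Fin.ext (by omega)]
  | succ d ih =>
    have hlt : (t : ℕ) + d < k := by omega
    have := ih (t' := ⟨t + d, hlt⟩) (Fin.le_def.2 (by simp)) rfl
    have := hg (show (⟨t + d, hlt⟩ : Fin k) < t' from Fin.lt_def.2 (by simp; omega))
    simp only at *
    omega

section Blocks

variable {N : ℕ}

def blockStart (n : Fin N → ℕ) (j : Fin N) : ℕ := ∑ t ∈ univ.filter (fun t => j < t), n t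

def pos (n : Fin N → ℕ) (c : Σ j, Fin (n j)) : ℕ := blockStart n c.1 + c.2

lemma blockStart_add_le {n : Fin N → ℕ} {j j' : Fin N} (h : j' < j) :
    blockStart n j + n j ≤ blockStart n j' := by
  rw [blockStart, blockStart, add_comm, ← sum_insert (by simp)]
  refine sum_le_sum_of_subset fun t => ?_
  simp only [mem_insert, mem_filter, mem_univ, true_and]
  rintro (rfl | ht)
  exacts [h, h.trans ht]

lemma pos_lt_pos_of_fst_lt {n : Fin N → ℕ} {c c' : Σ j, Fin (n j)} (h : c.1 < c'.1) :
    pos n c' < pos n c := by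
  have := blockStart_add_le (n := n) h
  have := c'.2.2
  unfold pos
  omega

lemma pos_injective (n : Fin N → ℕ) : Injective (pos n) := by
  rintro ⟨j, t⟩ ⟨j', t'⟩ h
  rcases lt_trichotomy j j' with hj | rfl | hj
  · exact absurd h (pos_lt_pos_of_fst_lt hj).ne'
  · exact Sigma.ext rfl (heq_of_eq (Fin.ext (by simpa [pos] using h)))
  · exact absurd h (pos_lt_pos_of_fst_lt hj).ne

abbrev BPlus (N : ℕ) := {q : Σ n : Fin N → ℕ, (j : Fin N) → Fin (n j) → ℕ //
  (∀ j, StrictMono (q.2 j)) ∧ ∀ j i, blockStart q.1 j ≤ q.2 j i}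

namespace BPlus

def entry (q : BPlus N) (c : Σ j, Fin (q.1.1 j)) : ℕ := q.1.2 c.1 c.2

lemma pos_le_entry (q : BPlus N) (c : Σ j, Fin (q.1.1 j)) : pos q.1.1 c ≤ q.entry c := by
  obtain ⟨j, t⟩ := c
  have h₀ := q.2.2 j ⟨0, t.pos⟩
  have h₁ := (q.2.1 j).add_le_add_of_le (show ⟨0, t.pos⟩ ≤ t from Fin.le_def.2 (Nat.zero_le _))
  simp only [pos, entry] at *
  omega

lemma isStaircase (q : BPlus N) : IsStaircase Sigma.fst (pos q.1.1) q.entry where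
  injective := pos_injective _
  blk_le_of_lt _ _ h := not_lt.1 fun h' => (pos_lt_pos_of_fst_lt h').asymm h
  lt_of_blk_eq := by
    rintro ⟨j, t⟩ ⟨j', t'⟩ rfl h
    exact q.2.1 j (Fin.lt_def.2 (by simpa [pos] using h))
  le := q.pos_le_entry

noncomputable def diagMonomial (q : BPlus N) : (Fin N × ℕ) →₀ ℕ :=
  permMonomial Sigma.fst (pos q.1.1) q.entry 1

def gaps (q : BPlus N) (j : Fin N) : List ℕ :=
  List.ofFn fun t => q.1.2 j t - pos q.1.1 ⟨j, t⟩

lemma diagMonomial_apply (q : BPlus N) (j : Fin N) (l : ℕ) :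
    q.diagMonomial (j, l) = (q.gaps j).count l := by
  classical
  rw [diagMonomial, permMonomial, Finsupp.finsetSum_apply, gaps, List.count_ofFn,
    Fintype.sum_sigma, sum_eq_single j]
  · simp [Finsupp.single_apply, entry]
  · intro j' _ hj'
    simp [hj']
  · simp

lemma gaps_sorted (q : BPlus N) (j : Fin N) : (q.gaps j).Pairwise (· ≤ ·) := by
  refine List.pairwise_ofFn.2 fun t t' htt => ?_
  have := (q.2.1 j).add_le_add_of_le htt.le
  have := q.pos_le_entry ⟨j, t⟩
  have := q.pos_le_entry ⟨j, t'⟩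
  simp only [pos, entry] at *
  omega

theorem diagMonomial_injective : Injective (diagMonomial (N := N)) := by
  intro q q' h
  have hgaps : ∀ j, q.gaps j = q'.gaps j := fun j =>
    (List.perm_iff_count.2 fun l => by rw [← diagMonomial_apply, ← diagMonomial_apply, h])
      |>.eq_of_pairwise' (q.gaps_sorted j) (q'.gaps_sorted j)
  obtain ⟨⟨n, α⟩, hα⟩ := q
  obtain ⟨⟨n', α'⟩, hα'⟩ := q'
  obtain rfl : n = n' := funext fun j => by simpa [gaps] using congrArg List.length (hgaps j)
  obtain rfl : α = α' := funext fun j => funext fun t => by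
    have := congrFun (List.ofFn_injective (hgaps j)) t
    have := pos_le_entry ⟨⟨n, α⟩, hα⟩ ⟨j, t⟩
    have := pos_le_entry ⟨⟨n, α'⟩, hα'⟩ ⟨j, t⟩
    simp only [entry] at *
    omega
  rfl

theorem diagMonomial_surjective : Surjective (diagMonomial (N := N)) := by
  classical
  intro m
  set L : Fin N → List ℕ := fun j => (m.curry j).toMultiset.sort (· ≤ ·)
  set n : Fin N → ℕ := fun j => (L j).length
  set α : (j : Fin N) → Fin (n j) → ℕ := fun j t => blockStart n j + t + (L j).get t
  have hL : ∀ j, (L j).Pairwise (· ≤ ·) := fun j => Multiset.pairwise_sort _ _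
  have hα : ∀ j, StrictMono (α j) := fun j t t' htt => by
    have := List.pairwise_iff_get.1 (hL j) t t' htt
    have : (t : ℕ) < t' := htt
    simp only [α]
    omega
  have hbd : ∀ j i, blockStart n j ≤ α j i := fun j i => by simp only [α]; omega
  refine ⟨⟨⟨n, α⟩, hα, hbd⟩, ?_⟩
  ext ⟨j, l⟩
  have hgaps : gaps ⟨⟨n, α⟩, hα, hbd⟩ j = L j := by
    refine (congrArg List.ofFn (funext fun t => ?_)).trans (List.ofFn_get (L j))
    simp only [α, pos]
    omega
  rw [diagMonomial_apply, hgaps, ← Multiset.coe_count, Multiset.sort_eq,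
    Finsupp.count_toMultiset, Finsupp.curry_apply]

end BPlus

end Blocks

/-- the family { det Δ_0(α) : α ∈ B^{N+} } is a basis of the
polynomial ring E = ℂ[x_{0j}^{(l)} : 1 ≤ j ≤ N, l ≥ 0] (formalized as the
multivariate polynomial ring with variables `X (j, l)` = x_{0j}^{(l)}). Here
B^{N+} is the set of N-tuples of strictly increasing finite sequences with all
entries of α^j at least s_{j+1} = Σ_{t > j} n_t, and Δ_0(α) is the square matrix
of size Σ n_j whose column indexed by (j, t) — occupying position s_{j+1} + t —
has, at row position q, the entry binom(α^j_t, q) x_{0j}^{(α^j_t - q)}. -/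
theorem stmt_19 (N : ℕ) :
    let B := {q : Σ n : Fin N → ℕ, (j : Fin N) → Fin (n j) → ℕ //
      (∀ j, StrictMono (q.2 j)) ∧
      ∀ j i, (∑ t ∈ Finset.univ.filter (fun t => j < t), q.1 t) ≤ q.2 j i}
    let f : B → MvPolynomial (Fin N × ℕ) ℂ := fun q =>
      Matrix.det (fun r c : Σ j : Fin N, Fin (q.1.1 j) =>
        MvPolynomial.C ((q.1.2 c.1 c.2).choose
            ((∑ t ∈ Finset.univ.filter (fun t => r.1 < t), q.1.1 t) + (r.2 : ℕ)) : ℂ)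
          * MvPolynomial.X (c.1, q.1.2 c.1 c.2
              - ((∑ t ∈ Finset.univ.filter (fun t => r.1 < t), q.1.1 t) + (r.2 : ℕ))))
    LinearIndependent ℂ f ∧ Submodule.span ℂ (Set.range f) = ⊤ := by
  intro B f
  change LinearIndependent ℂ (fun q : BPlus N => (jetMatrix Sigma.fst (pos q.1.1) q.entry).det) ∧
    Submodule.span ℂ
      (Set.range fun q : BPlus N => (jetMatrix Sigma.fst (pos q.1.1) q.entry).det) = ⊤
  have hwf := wellFounded_fiberwise_gt (Finsupp.weight (jetWeight (β := Fin N))) colexKey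
    fun w => Finsupp.finite_setOf_weight_eq jetWeight (fun _ => Nat.succ_ne_zero _)
      finite_setOf_jetWeight_le w
  exact ⟨linearIndependent_of_triangular colexKey _ BPlus.diagMonomial
      BPlus.diagMonomial_injective (fun q => q.isStaircase.coeff_det_ne_zero)
      fun q _ hm hne => (q.isStaircase.mem_support_det hm hne).2,
    span_range_eq_top_of_triangular _ BPlus.diagMonomial BPlus.diagMonomial_surjective hwf
      (fun q => q.isStaircase.coeff_det_ne_zero)
      fun q _ hm hne => q.isStaircase.mem_support_det hm hne⟩
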